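/- arXiv:math/0112257 — 5 statements merged into one kernel-verified Lean document; each statement's English description precedes it below -/
import Mathlib

section
/- Let 1 = a_1 < a_2 < ... < a_k be positive integers and h_0 = Σ_{i=1}^{k-1} ⌊a_{i+1}/a_i⌋. Then every integer n with 0 ≤ n ≤ a_k has a representation n = Σ x_i a_i with nonnegative integers x_i satisfying Σ x_i ≤ h_0; consequently N_{h_0}(a_1,...,a_k) > a_k. -/
open Finset

/-- `n` is representable with weight at most `h` in basis `a 1, ..., a k`. -/
def IsRep (k : ℕ) (a : ℕ → ℕ) (h n : ℕ) : Prop :=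
  ∃ x : ℕ → ℕ, ∑ i ∈ Finset.Icc 1 k, x i * a i = n ∧ ∑ i ∈ Finset.Icc 1 k, x i ≤ h

/-- `postN k a h` is `N_h(a_1,...,a_k)`: the least positive integer not `h`-representable. -/
noncomputable def postN (k : ℕ) (a : ℕ → ℕ) (h : ℕ) : ℕ := sInf {n : ℕ | 0 < n ∧ ¬ IsRep k a h n}

/-- `h_0 = ∑_{i=1}^{k-1} ⌊a_{i+1}/a_i⌋`. -/
def selmerH0 (k : ℕ) (a : ℕ → ℕ) : ℕ := ∑ i ∈ Finset.Icc 1 (k-1), a (i+1) / a i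

/-- `h_1 = h_0 + ⌈(h_0+1)·a_{k-1}/(a_k - a_{k-1})⌉`. -/
def selmerH1 (k : ℕ) (a : ℕ → ℕ) : ℕ :=
  selmerH0 k a +
    ((selmerH0 k a + 1) * a (k-1) + (a k - a (k-1)) - 1) / (a k - a (k-1))

/-- The Frobenius number (as an integer) of the basis `b 1, ..., b k`:
the largest integer not a nonnegative integer combination of the `b i`. -/
noncomputable def FrobZ (k : ℕ) (b : ℕ → ℕ) : ℤ :=
  sSup {n : ℤ | ¬ ∃ x : ℕ → ℕ, ((∑ i ∈ Finset.Icc 1 k, x i * b i : ℕ) : ℤ) = n}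

/-- The Frobenius number (as an integer) of the complementary basis
`a_k - a_{k-1}, ..., a_k - a_1, a_k`. -/
noncomputable def FrobCompZ (k : ℕ) (a : ℕ → ℕ) : ℤ :=
  sSup {n : ℤ | ¬ ∃ y : ℕ → ℕ,
    ((∑ i ∈ Finset.Icc 1 (k-1), y i * (a k - a i) + y k * a k : ℕ) : ℤ) = n}

theorem stmt1 (k : ℕ) (a : ℕ → ℕ) (hk : 2 ≤ k) (ha1 : a 1 = 1)
    (hmono : ∀ i, 1 ≤ i → i < k → a i < a (i + 1)) :
    (∀ n : ℕ, n ≤ a k → IsRep k a (selmerH0 k a) n) ∧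
    a k < postN k a (selmerH0 k a) := by
  -- positivity and monotonicity of a on [1,k]
  have hpos : ∀ j, 1 ≤ j → j ≤ k → 1 ≤ a j := by
    intro j hj1 hjk
    induction j with
    | zero => omega
    | succ m ih =>
      rcases Nat.eq_or_lt_of_le hj1 with h | h
      · simp [← h, ha1]
      · have hm1 : 1 ≤ m := by omega
        have := hmono m hm1 (by omega)
        have := ih hm1 (by omega)
        omega
  have hmono' : ∀ i j, 1 ≤ i → i ≤ j → j ≤ k → a i ≤ a j := by
    intro i j hi hij hjk
    induction j with
    | zero => omega
    | succ m ih =>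
      rcases Nat.eq_or_lt_of_le hij with h | h
      · rw [h]
      · have : a m < a (m+1) := hmono m (by omega) (by omega)
        have := ih (by omega) (by omega)
        omega
  -- key greedy lemma
  have key : ∀ j, 2 ≤ j → j ≤ k → ∀ n, n ≤ a j →
      ∃ x : ℕ → ℕ, ∑ i ∈ Finset.Icc 1 j, x i * a i = n ∧
        ∑ i ∈ Finset.Icc 1 j, x i ≤ ∑ i ∈ Finset.Icc 1 (j-1), a (i+1) / a i ∧
        ∀ i, x i ≠ 0 → i ∈ Finset.Icc 1 j := by
    intro j hj2
    induction j, hj2 using Nat.le_induction with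
    | base =>
      intro hjk n hn
      refine ⟨fun i => if i = 1 then n else 0, ?_, ?_, ?_⟩
      · rw [show Finset.Icc 1 2 = {1, 2} by rfl]
        simp [ha1]
      · rw [show Finset.Icc 1 2 = {1, 2} by rfl, show (2:ℕ)-1 = 1 by rfl,
          show Finset.Icc 1 1 = {1} by rfl]
        simp [ha1, hn]
      · intro i hi
        by_cases h : i = 1 <;> simp [h] at hi ⊢
    | succ j hj2 ih =>
      intro hjk n hn
      have hjk' : j ≤ k := by omega
      have haj : 1 ≤ a j := hpos j (by omega) hjk'
      have hr : n % a j < a j := Nat.mod_lt _ haj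
      obtain ⟨x, hsum, hw, hsupp⟩ := ih hjk' (n % a j) (le_of_lt hr)
      have hq : n / a j ≤ a (j+1) / a j := Nat.div_le_div_right hn
      have hxj1 : x (j+1) = 0 := by
        by_contra h
        have := hsupp _ h
        rw [Finset.mem_Icc] at this
        omega
      refine ⟨fun i => x i + (if i = j then n / a j else 0), ?_, ?_, ?_⟩
      · have h1 : ∑ i ∈ Finset.Icc 1 (j+1),
            (x i + (if i = j then n / a j else 0)) * a i
            = ∑ i ∈ Finset.Icc 1 (j+1), x i * a i
              + ∑ i ∈ Finset.Icc 1 (j+1), (if i = j then n / a j * a i else 0) := by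
          rw [← Finset.sum_add_distrib]
          congr 1; ext i
          by_cases h : i = j <;> simp [h, add_mul]
        rw [h1, Finset.sum_ite_eq' (Finset.Icc 1 (j+1)) j (fun i => n / a j * a i)]
        rw [if_pos (by simp [Finset.mem_Icc]; omega)]
        rw [Finset.sum_Icc_succ_top (by omega : 1 ≤ j+1), hxj1]
        simp only [zero_mul, add_zero] at hsum ⊢
        rw [hsum]
        exact Nat.mod_add_div' n (a j)
      · have h1 : ∑ i ∈ Finset.Icc 1 (j+1),
            (x i + (if i = j then n / a j else 0))
            = ∑ i ∈ Finset.Icc 1 (j+1), x i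
              + ∑ i ∈ Finset.Icc 1 (j+1), (if i = j then n / a j else 0) := by
          rw [← Finset.sum_add_distrib]
        rw [h1, Finset.sum_ite_eq' (Finset.Icc 1 (j+1)) j (fun _ => n / a j)]
        rw [if_pos (by simp [Finset.mem_Icc]; omega)]
        rw [Finset.sum_Icc_succ_top (by omega : 1 ≤ j+1), hxj1, add_zero]
        have h2 : ∑ i ∈ Finset.Icc 1 ((j+1)-1), a (i+1) / a i
            = ∑ i ∈ Finset.Icc 1 (j-1), a (i+1) / a i + a (j+1) / a j := by
          have : (j+1)-1 = j := by omega
          rw [this]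
          have hj1 : 1 ≤ j := by omega
          rw [show j = (j-1)+1 by omega, Finset.sum_Icc_succ_top (by omega : 1 ≤ j-1+1)]
          congr 2 <;> omega
        rw [h2]
        omega
      · intro i hi
        by_cases h : i = j
        · simp [Finset.mem_Icc]; omega
        · simp [h] at hi
          have := hsupp _ hi
          simp [Finset.mem_Icc] at this ⊢
          omega
  have part1 : ∀ n : ℕ, n ≤ a k → IsRep k a (selmerH0 k a) n := by
    intro n hn
    obtain ⟨x, hsum, hw, _⟩ := key k hk le_rfl n hn
    exact ⟨x, hsum, hw⟩
  refine ⟨part1, ?_⟩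
  -- the set is nonempty
  set S := {n : ℕ | 0 < n ∧ ¬ IsRep k a (selmerH0 k a) n} with hS
  have hne : (selmerH0 k a * a k + 1) ∈ S := by
    constructor
    · omega
    · rintro ⟨x, hsum, hw⟩
      have hle : ∑ i ∈ Finset.Icc 1 k, x i * a i ≤ ∑ i ∈ Finset.Icc 1 k, x i * a k := by
        apply Finset.sum_le_sum
        intro i hi
        simp [Finset.mem_Icc] at hi
        exact Nat.mul_le_mul_left _ (hmono' i k hi.1 hi.2 le_rfl)
      rw [← Finset.sum_mul] at hle
      have : selmerH0 k a * a k + 1 ≤ selmerH0 k a * a k := by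
        calc selmerH0 k a * a k + 1 = ∑ i ∈ Finset.Icc 1 k, x i * a i := hsum.symm
        _ ≤ (∑ i ∈ Finset.Icc 1 k, x i) * a k := hle
        _ ≤ selmerH0 k a * a k := Nat.mul_le_mul_right _ hw
      omega
  have hmem : postN k a (selmerH0 k a) ∈ S := Nat.sInf_mem ⟨_, hne⟩
  obtain ⟨hpos', hnotrep⟩ := hmem
  by_contra h
  push_neg at h
  exact hnotrep (part1 _ h)
end

section
/- Let 1 = a_1 < ... < a_k and h_0 = Σ_{i=1}^{k-1} ⌊a_{i+1}/a_i⌋. Then for all i ≥ 0, N_{h_0 + i}(a_1,...,a_k) > (i+1)·a_k, i.e., every integer n with 0 ≤ n ≤ (i+1)a_k has a representation of weight at most h_0 + i. -/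
open Finset

/-- Positivity helper. -/
lemma a_pos (k : ℕ) (a : ℕ → ℕ) (ha1 : a 1 = 1)
    (hmono : ∀ i, 1 ≤ i → i < k → a i < a (i + 1)) :
    ∀ j, 1 ≤ j → j ≤ k → 1 ≤ a j := by
  intro j
  induction j with
  | zero => omega
  | succ j ih =>
    intro _ hjk
    rcases Nat.eq_zero_or_pos j with h0 | h0
    · subst h0; simp only [Nat.zero_add]; omega
    · have := hmono j h0 (by omega)
      have := ih h0 (by omega)
      omega

/-- Monotonicity helper: every `a j` is at most `a k`. -/
lemma a_le_top (k : ℕ) (a : ℕ → ℕ)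
    (hmono : ∀ i, 1 ≤ i → i < k → a i < a (i + 1)) :
    ∀ m j, 1 ≤ j → j + m = k → a j ≤ a k := by
  intro m
  induction m with
  | zero =>
    intro j _ hj
    have : j = k := by omega
    rw [this]
  | succ m ih =>
    intro j hj hjm
    have h1 : a j < a (j+1) := hmono j hj (by omega)
    have h2 : a (j+1) ≤ a k := ih (j+1) (by omega) (by omega)
    omega

/-- The greedy representation lemma. -/
lemma greedy (k : ℕ) (a : ℕ → ℕ) (ha1 : a 1 = 1)
    (hmono : ∀ i, 1 ≤ i → i < k → a i < a (i + 1)) :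
    ∀ j, j ≤ k - 1 → ∀ n, n < a (j+1) → ∃ x : ℕ → ℕ,
      ∑ i ∈ Finset.Icc 1 k, x i * a i = n ∧
      ∑ i ∈ Finset.Icc 1 k, x i ≤ ∑ i ∈ Finset.Icc 1 j, a (i+1) / a i := by
  intro j
  induction j with
  | zero =>
    intro _ n hn
    rw [ha1] at hn
    interval_cases n
    exact ⟨fun _ => 0, by simp, by simp⟩
  | succ j ih =>
    intro hjk n hn
    have hkj : 1 ≤ k := by omega
    have haj : 1 ≤ a (j+1) := a_pos k a ha1 hmono (j+1) (by omega) (by omega)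
    set q := n / a (j+1) with hq
    set r := n % a (j+1) with hr
    have hrlt : r < a (j+1) := Nat.mod_lt _ (by omega)
    obtain ⟨x, hx1, hx2⟩ := ih (by omega) r hrlt
    have hmem : (j+1) ∈ Finset.Icc 1 k := by simp only [Finset.mem_Icc]; omega
    refine ⟨fun i => x i + if i = j+1 then q else 0, ?_, ?_⟩
    · show ∑ i ∈ Finset.Icc 1 k, (x i + if i = j+1 then q else 0) * a i = n
      have h1 : ∑ i ∈ Finset.Icc 1 k, (x i + if i = j+1 then q else 0) * a i
          = (∑ i ∈ Finset.Icc 1 k, x i * a i)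
            + ∑ i ∈ Finset.Icc 1 k, (if i = j+1 then q * a i else 0) := by
        rw [← Finset.sum_add_distrib]
        congr 1; ext i; by_cases h : i = j+1 <;> simp [h, add_mul]
      rw [h1, hx1, Finset.sum_ite_eq' (Finset.Icc 1 k) (j+1) (fun i => q * a i),
        if_pos hmem, hq, hr]
      exact Nat.mod_add_div' n (a (j+1))
    · show ∑ i ∈ Finset.Icc 1 k, (x i + if i = j+1 then q else 0)
        ≤ ∑ i ∈ Finset.Icc 1 (j+1), a (i+1) / a i
      rw [Finset.sum_add_distrib,
        Finset.sum_ite_eq' (Finset.Icc 1 k) (j+1) (fun _ => q), if_pos hmem]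
      have hqle : q ≤ a (j+1+1) / a (j+1) := Nat.div_le_div_right hn.le
      rw [Finset.sum_Icc_succ_top (by omega : 1 ≤ j+1)]
      omega

theorem stmt2 (k : ℕ) (a : ℕ → ℕ) (hk : 2 ≤ k) (ha1 : a 1 = 1)
    (hmono : ∀ i, 1 ≤ i → i < k → a i < a (i + 1)) :
    ∀ i : ℕ, (∀ n : ℕ, n ≤ (i + 1) * a k → IsRep k a (selmerH0 k a + i) n) ∧
      (i + 1) * a k < postN k a (selmerH0 k a + i) := by
  have hak : 1 ≤ a k := a_pos k a ha1 hmono k (by omega) le_rfl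
  have hh0 : 1 ≤ selmerH0 k a := by
    unfold selmerH0
    have h1 : (1 : ℕ) ∈ Finset.Icc 1 (k-1) := by simp only [Finset.mem_Icc]; omega
    have hterm : 1 ≤ a (1+1) / a 1 := by
      have h2 := hmono 1 le_rfl (by omega)
      rw [ha1] at h2 ⊢
      rw [Nat.div_one]
      omega
    calc 1 ≤ a (1+1) / a 1 := hterm
      _ ≤ _ := Finset.single_le_sum (f := fun i => a (i+1) / a i) (fun _ _ => Nat.zero_le _) h1
  -- base: every n ≤ a k is representable with weight ≤ h0
  have base : ∀ n, n ≤ a k → IsRep k a (selmerH0 k a) n := by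
    intro n hn
    have hmemk : k ∈ Finset.Icc 1 k := by simp only [Finset.mem_Icc]; omega
    rcases lt_or_eq_of_le hn with hlt | heq
    · have hk1 : k - 1 + 1 = k := by omega
      obtain ⟨x, hx1, hx2⟩ := greedy k a ha1 hmono (k-1) le_rfl n (by rwa [hk1])
      exact ⟨x, hx1, by rwa [selmerH0]⟩
    · refine ⟨fun i => if i = k then 1 else 0, ?_, ?_⟩
      · show ∑ i ∈ Finset.Icc 1 k, (if i = k then 1 else 0) * a i = n
        have h1 : ∑ i ∈ Finset.Icc 1 k, (if i = k then 1 else 0) * a i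
            = ∑ i ∈ Finset.Icc 1 k, (if i = k then a i else 0) := by
          congr 1; ext i; by_cases h : i = k <;> simp [h]
        rw [h1, Finset.sum_ite_eq' (Finset.Icc 1 k) k (fun i => a i), if_pos hmemk]
        exact heq.symm
      · show ∑ i ∈ Finset.Icc 1 k, (if i = k then 1 else 0) ≤ selmerH0 k a
        rw [Finset.sum_ite_eq' (Finset.Icc 1 k) k (fun _ => 1), if_pos hmemk]
        exact hh0
  -- inductive step: every n ≤ (i+1) a_k is representable with weight ≤ h0 + i
  have main : ∀ i n, n ≤ (i + 1) * a k → IsRep k a (selmerH0 k a + i) n := by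
    intro i
    induction i with
    | zero => intro n hn; simpa using base n (by omega)
    | succ i ih =>
      intro n hn
      have hmemk : k ∈ Finset.Icc 1 k := by simp only [Finset.mem_Icc]; omega
      have hmul : (i + 1 + 1) * a k = (i + 1) * a k + a k := by ring
      by_cases hcase : n ≤ (i + 1) * a k
      · obtain ⟨x, hx1, hx2⟩ := ih n hcase
        exact ⟨x, hx1, by omega⟩
      · push_neg at hcase
        have hnk : a k ≤ n := by nlinarith
        obtain ⟨x, hx1, hx2⟩ := ih (n - a k) (by omega)
        refine ⟨fun i => x i + if i = k then 1 else 0, ?_, ?_⟩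
        · show ∑ i ∈ Finset.Icc 1 k, (x i + if i = k then 1 else 0) * a i = n
          have h1 : ∑ i ∈ Finset.Icc 1 k, (x i + if i = k then 1 else 0) * a i
              = (∑ i ∈ Finset.Icc 1 k, x i * a i)
                + ∑ i ∈ Finset.Icc 1 k, (if i = k then a i else 0) := by
            rw [← Finset.sum_add_distrib]
            congr 1; ext i; by_cases h : i = k <;> simp [h, add_mul]
          rw [h1, hx1, Finset.sum_ite_eq' (Finset.Icc 1 k) k (fun i => a i), if_pos hmemk]
          omega
        · show ∑ i ∈ Finset.Icc 1 k, (x i + if i = k then 1 else 0)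
            ≤ selmerH0 k a + (i + 1)
          rw [Finset.sum_add_distrib,
            Finset.sum_ite_eq' (Finset.Icc 1 k) k (fun _ => 1), if_pos hmemk]
          omega
  intro i
  refine ⟨main i, ?_⟩
  set h := selmerH0 k a + i with hh
  have hub : ∀ x : ℕ → ℕ, ∑ j ∈ Finset.Icc 1 k, x j * a j ≤ (∑ j ∈ Finset.Icc 1 k, x j) * a k := by
    intro x
    rw [Finset.sum_mul]
    apply Finset.sum_le_sum
    intro j hj
    simp only [Finset.mem_Icc] at hj
    exact Nat.mul_le_mul_left _ (a_le_top k a hmono (k - j) j hj.1 (by omega))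
  have hne : {n : ℕ | 0 < n ∧ ¬ IsRep k a h n}.Nonempty := by
    refine ⟨h * a k + 1, by omega, ?_⟩
    rintro ⟨x, hx1, hx2⟩
    have h1 := hub x
    have h2 : (∑ j ∈ Finset.Icc 1 k, x j) * a k ≤ h * a k := Nat.mul_le_mul_right _ hx2
    omega
  have hmem := Nat.sInf_mem hne
  obtain ⟨hpos, hrep⟩ := hmem
  rw [postN]
  by_contra hcon
  push_neg at hcon
  exact hrep (main i _ hcon)
end

section
/- Let 1 = a_1 < ... < a_k, and suppose h is such that every integer in [0, a_k] has a representation of weight ≤ h and N_h(a_1,...,a_k) + a_k > (h+1)·a_{k-1}. Then N_{h+1}(a_1,...,a_k) = N_h(a_1,...,a_k) + a_k. -/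
open Finset

theorem stmt3 (k : ℕ) (a : ℕ → ℕ) (hk : 2 ≤ k) (ha1 : a 1 = 1)
    (hmono : ∀ i, 1 ≤ i → i < k → a i < a (i + 1)) (h : ℕ)
    (hrep : ∀ n : ℕ, n ≤ a k → IsRep k a h n)
    (hgap : (h + 1) * a (k - 1) < postN k a h + a k) :
    postN k a (h + 1) = postN k a h + a k := by
  -- monotonicity of a on [1, k]
  have amono : ∀ i j, 1 ≤ i → i ≤ j → j ≤ k → a i ≤ a j := by
    intro i j hi hij hjk
    induction j with
    | zero => omega
    | succ n ih =>
      rcases Nat.lt_or_ge i (n+1) with hlt | hge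
      · have h1 : a i ≤ a n := ih (by omega) (by omega)
        have h2 : a n < a (n+1) := hmono n (by omega) (by omega)
        omega
      · have : i = n + 1 := by omega
        subst this; exact le_refl _
  -- any h'-representable n is at most h' * a k
  have bound : ∀ h' n : ℕ, IsRep k a h' n → n ≤ h' * a k := by
    rintro h' n ⟨x, hsum, hw⟩
    calc n = ∑ i ∈ Icc 1 k, x i * a i := hsum.symm
      _ ≤ ∑ i ∈ Icc 1 k, x i * a k := by
          refine sum_le_sum fun i hi => ?_
          rw [mem_Icc] at hi
          exact Nat.mul_le_mul_left _ (amono i k hi.1 hi.2 le_rfl)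
      _ = (∑ i ∈ Icc 1 k, x i) * a k := by rw [sum_mul]
      _ ≤ h' * a k := Nat.mul_le_mul_right _ hw
  have hSne : ∀ h' : ℕ, {n : ℕ | 0 < n ∧ ¬ IsRep k a h' n}.Nonempty := by
    intro h'
    exact ⟨h' * a k + 1, by omega, fun hr => by have := bound h' _ hr; omega⟩
  set N := postN k a h with hN
  have hNmem : N ∈ {n : ℕ | 0 < n ∧ ¬ IsRep k a h n} := Nat.sInf_mem (hSne h)
  have hNmin : ∀ n, 0 < n → n < N → IsRep k a h n := by
    intro n h0 hn
    by_contra hc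
    exact Nat.notMem_of_lt_sInf hn ⟨h0, hc⟩
  have hk1 : k ∈ Icc 1 k := by rw [mem_Icc]; omega
  -- N + a k is not (h+1)-representable
  have hnot : ¬ IsRep k a (h+1) (N + a k) := by
    rintro ⟨x, hsum, hw⟩
    by_cases hxk : x k = 0
    · have hle : N + a k ≤ (h+1) * a (k-1) := by
        calc N + a k = ∑ i ∈ Icc 1 k, x i * a i := hsum.symm
          _ ≤ ∑ i ∈ Icc 1 k, x i * a (k-1) := by
              refine sum_le_sum fun i hi => ?_
              rw [mem_Icc] at hi
              rcases Nat.lt_or_ge i k with hik | hik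
              · exact Nat.mul_le_mul_left _ (amono i (k-1) hi.1 (by omega) (by omega))
              · have : i = k := by omega
                subst this; simp [hxk]
          _ = (∑ i ∈ Icc 1 k, x i) * a (k-1) := by rw [sum_mul]
          _ ≤ (h+1) * a (k-1) := Nat.mul_le_mul_right _ hw
      omega
    · -- x k ≥ 1, remove one copy of a k to get a rep of N with weight ≤ h
      apply hNmem.2
      refine ⟨fun i => if i = k then x k - 1 else x i, ?_, ?_⟩
      · rw [← Finset.sum_erase_add _ _ hk1] at hsum ⊢
        have he : ∑ i ∈ (Icc 1 k).erase k, (if i = k then x k - 1 else x i) * a i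
            = ∑ i ∈ (Icc 1 k).erase k, x i * a i := by
          refine sum_congr rfl fun i hi => ?_
          rw [Finset.mem_erase] at hi
          simp [hi.1]
        rw [he]
        beta_reduce; rw [if_pos rfl]
        have hxx : x k = (x k - 1) + 1 := by omega
        rw [hxx, add_mul, one_mul, ← add_assoc] at hsum
        omega
      · rw [← Finset.sum_erase_add _ _ hk1] at hw ⊢
        have he : ∑ i ∈ (Icc 1 k).erase k, (if i = k then x k - 1 else x i)
            = ∑ i ∈ (Icc 1 k).erase k, x i := by
          refine sum_congr rfl fun i hi => ?_
          rw [Finset.mem_erase] at hi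
          simp [hi.1]
        rw [he]
        beta_reduce; rw [if_pos rfl]
        omega
  -- every positive n < N + a k is (h+1)-representable
  have hall : ∀ n, 0 < n → n < N + a k → IsRep k a (h+1) n := by
    intro n h0 hn
    rcases Nat.lt_or_ge (a k) n with hbig | hsmall
    · obtain ⟨x, hsum, hw⟩ := hNmin (n - a k) (by omega) (by omega)
      refine ⟨fun i => if i = k then x k + 1 else x i, ?_, ?_⟩
      · rw [← Finset.sum_erase_add _ _ hk1] at hsum ⊢
        have he : ∑ i ∈ (Icc 1 k).erase k, (if i = k then x k + 1 else x i) * a i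
            = ∑ i ∈ (Icc 1 k).erase k, x i * a i := by
          refine sum_congr rfl fun i hi => ?_
          rw [Finset.mem_erase] at hi
          simp [hi.1]
        rw [he]
        beta_reduce; rw [if_pos rfl]
        rw [add_mul, one_mul, ← add_assoc]
        omega
      · rw [← Finset.sum_erase_add _ _ hk1] at hw ⊢
        have he : ∑ i ∈ (Icc 1 k).erase k, (if i = k then x k + 1 else x i)
            = ∑ i ∈ (Icc 1 k).erase k, x i := by
          refine sum_congr rfl fun i hi => ?_
          rw [Finset.mem_erase] at hi
          simp [hi.1]
        rw [he]
        beta_reduce; rw [if_pos rfl]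
        omega
    · obtain ⟨x, hsum, hw⟩ := hrep n hsmall
      exact ⟨x, hsum, by omega⟩
  -- combine
  apply le_antisymm
  · exact Nat.sInf_le ⟨by omega, hnot⟩
  · refine le_csInf ⟨N + a k, by omega, hnot⟩ fun b hb => ?_
    by_contra hc
    exact hb.2 (hall b hb.1 (by omega))
end

section
/- Let 1 = a_1 < ... < a_k and h_1 = h_0 + ⌈(h_0+1)·a_{k-1}/(a_k - a_{k-1})⌉ where h_0 = Σ_{i=1}^{k-1} ⌊a_{i+1}/a_i⌋. Then for all h ≥ h_1, N_{h+1}(a_1,...,a_k) = N_h(a_1,...,a_k) + a_k. -/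
open Finset

section Aux

variable {k : ℕ} {a : ℕ → ℕ}

lemma aux_mono (hmono : ∀ i, 1 ≤ i → i < k → a i < a (i + 1)) :
    ∀ i j, 1 ≤ i → i ≤ j → j ≤ k → a i ≤ a j := by
  intro i j h1 hij hjk
  induction j with
  | zero => omega
  | succ j ih =>
    rcases Nat.lt_or_ge i (j+1) with hlt | hge
    · have h1' : a i ≤ a j := ih (by omega) (by omega)
      have h2' : a j < a (j+1) := hmono j (by omega) (by omega)
      omega
    · have : i = j + 1 := by omega
      subst this; rfl

lemma aux_pos (ha1 : a 1 = 1) (hmono : ∀ i, 1 ≤ i → i < k → a i < a (i + 1)) :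
    ∀ i, 1 ≤ i → i ≤ k → 1 ≤ a i := by
  intro i h1 hik
  have := aux_mono hmono 1 i le_rfl h1 hik
  omega

lemma aux_sum_ite (c j : ℕ) (hj : j ∈ Finset.Icc 1 k) (y : ℕ → ℕ) :
    ∑ i ∈ Finset.Icc 1 k, (y i + if i = j then c else 0) * a i
      = (∑ i ∈ Finset.Icc 1 k, y i * a i) + c * a j := by
  simp only [add_mul, Finset.sum_add_distrib, ite_mul, zero_mul]
  rw [Finset.sum_ite_eq' (Finset.Icc 1 k) j (fun i => c * a i), if_pos hj]

lemma aux_sum_ite_w (c j : ℕ) (hj : j ∈ Finset.Icc 1 k) (y : ℕ → ℕ) :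
    ∑ i ∈ Finset.Icc 1 k, (y i + if i = j then c else 0)
      = (∑ i ∈ Finset.Icc 1 k, y i) + c := by
  rw [Finset.sum_add_distrib,
    Finset.sum_ite_eq' (Finset.Icc 1 k) j (fun _ => c), if_pos hj]

lemma aux_greedy (ha1 : a 1 = 1) (hmono : ∀ i, 1 ≤ i → i < k → a i < a (i + 1)) :
    ∀ j, j ≤ k - 1 → ∀ n, n < a (j+1) →
      ∃ x : ℕ → ℕ, (∑ i ∈ Finset.Icc 1 k, x i * a i = n) ∧
        (∑ i ∈ Finset.Icc 1 k, x i ≤ ∑ i ∈ Finset.Icc 1 j, a (i+1) / a i) := by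
  intro j
  induction j with
  | zero =>
    intro _ n hn
    rw [ha1] at hn
    interval_cases n
    exact ⟨fun _ => 0, by simp, by simp⟩
  | succ j ih =>
    intro hj n hn
    have hjk : j + 1 ≤ k := by omega
    have hpos : 1 ≤ a (j+1) := aux_pos ha1 hmono (j+1) (by omega) hjk
    obtain ⟨y, hy1, hy2⟩ := ih (by omega) (n % a (j+1)) (Nat.mod_lt _ (by omega))
    have hmem : j + 1 ∈ Finset.Icc 1 k := by simp; omega
    refine ⟨fun i => y i + if i = j+1 then n / a (j+1) else 0, ?_, ?_⟩
    · rw [aux_sum_ite _ _ hmem, hy1, Nat.mod_add_div']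
    · rw [aux_sum_ite_w _ _ hmem, Finset.sum_Icc_succ_top (by omega : 1 ≤ j + 1)]
      have hq : n / a (j+1) ≤ a (j+1+1) / a (j+1) :=
        Nat.div_le_div_right (le_of_lt hn)
      omega

lemma aux_rep (ha1 : a 1 = 1) (hmono : ∀ i, 1 ≤ i → i < k → a i < a (i + 1))
    (hk : 2 ≤ k) (n h : ℕ) (hle : selmerH0 k a + n / a k ≤ h) : IsRep k a h n := by
  have hak : 1 ≤ a k := aux_pos ha1 hmono k (by omega) le_rfl
  have hkk : k - 1 + 1 = k := by omega
  obtain ⟨y, hy1, hy2⟩ := aux_greedy ha1 hmono (k-1) le_rfl (n % a k)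
    (by rw [hkk]; exact Nat.mod_lt _ (by omega))
  have hmem : k ∈ Finset.Icc 1 k := by simp; omega
  refine ⟨fun i => y i + if i = k then n / a k else 0, ?_, ?_⟩
  · rw [aux_sum_ite _ _ hmem, hy1, Nat.mod_add_div']
  · rw [aux_sum_ite_w _ _ hmem]
    have hsel : ∑ i ∈ Finset.Icc 1 (k-1), a (i+1) / a i = selmerH0 k a := rfl
    omega

lemma aux_rep_bound (hmono : ∀ i, 1 ≤ i → i < k → a i < a (i + 1))
    {h n : ℕ} (hr : IsRep k a h n) : n ≤ h * a k := by
  obtain ⟨x, hx1, hx2⟩ := hr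
  calc n = ∑ i ∈ Finset.Icc 1 k, x i * a i := hx1.symm
    _ ≤ ∑ i ∈ Finset.Icc 1 k, x i * a k := by
        refine Finset.sum_le_sum fun i hi => ?_
        simp only [Finset.mem_Icc] at hi
        exact Nat.mul_le_mul_left _ (aux_mono hmono i k hi.1 hi.2 le_rfl)
    _ = (∑ i ∈ Finset.Icc 1 k, x i) * a k := (Finset.sum_mul _ _ _).symm
    _ ≤ h * a k := Nat.mul_le_mul_right _ hx2

lemma aux_nonempty (hmono : ∀ i, 1 ≤ i → i < k → a i < a (i + 1)) (h : ℕ) :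
    {n : ℕ | 0 < n ∧ ¬ IsRep k a h n}.Nonempty := by
  refine ⟨h * a k + 1, by omega, fun hr => ?_⟩
  have := aux_rep_bound hmono hr
  omega

lemma postN_mem (hmono : ∀ i, 1 ≤ i → i < k → a i < a (i + 1)) (h : ℕ) :
    0 < postN k a h ∧ ¬ IsRep k a h (postN k a h) :=
  Nat.sInf_mem (aux_nonempty hmono h)

lemma postN_min {h m : ℕ} (hm : 0 < m) (hlt : m < postN k a h) : IsRep k a h m := by
  by_contra hc
  have hle : postN k a h ≤ m := Nat.sInf_le ⟨hm, hc⟩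
  omega

lemma postN_lb (ha1 : a 1 = 1) (hmono : ∀ i, 1 ≤ i → i < k → a i < a (i + 1))
    (hk : 2 ≤ k) {h : ℕ} (hh0 : selmerH0 k a ≤ h) :
    (h - selmerH0 k a + 1) * a k ≤ postN k a h := by
  have hak : 1 ≤ a k := aux_pos ha1 hmono k (by omega) le_rfl
  by_contra hc
  push_neg at hc
  have hdiv : postN k a h / a k < h - selmerH0 k a + 1 :=
    (Nat.div_lt_iff_lt_mul (by omega)).2 hc
  have hmem := postN_mem (k := k) (a := a) hmono h
  exact hmem.2 (aux_rep ha1 hmono hk _ _ (by omega))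

lemma aux_key (ha1 : a 1 = 1) (hk : 2 ≤ k)
    (hmono : ∀ i, 1 ≤ i → i < k → a i < a (i + 1)) {h : ℕ} (hh : selmerH1 k a ≤ h) :
    (h + 1) * a (k - 1) < (h - selmerH0 k a + 2) * a k := by
  have hkk : k - 1 + 1 = k := by omega
  have hd : a (k-1) < a k := by
    have := hmono (k-1) (by omega) (by omega)
    rwa [hkk] at this
  unfold selmerH1 at hh
  set h0 := selmerH0 k a with hh0def
  set d := a k - a (k-1) with hddef
  set c := ((h0 + 1) * a (k-1) + d - 1) / d with hcdef
  clear_value c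
  clear_value d
  clear_value h0
  have hd1 : 1 ≤ d := by omega
  have hcd : (h0 + 1) * a (k-1) ≤ d * c := by
    have h1 := Nat.div_add_mod ((h0 + 1) * a (k-1) + d - 1) d
    rw [← hcdef] at h1
    have h2 := Nat.mod_lt ((h0 + 1) * a (k-1) + d - 1) (show 0 < d by omega)
    omega
  obtain ⟨t, ht⟩ : ∃ t, h = h0 + c + t := ⟨h - h0 - c, by omega⟩
  have h2 : h - h0 + 2 = c + t + 2 := by omega
  have h3 : a k = a (k-1) + d := by omega
  rw [h2, h3, ht]
  nlinarith [hcd, hd1]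

end Aux

theorem stmt5 (k : ℕ) (a : ℕ → ℕ) (hk : 2 ≤ k) (ha1 : a 1 = 1)
    (hmono : ∀ i, 1 ≤ i → i < k → a i < a (i + 1)) (h : ℕ) (hh : selmerH1 k a ≤ h) :
    postN k a (h + 1) = postN k a h + a k := by
  have hkk : k - 1 + 1 = k := by omega
  have hak : 1 ≤ a k := aux_pos ha1 hmono k (by omega) le_rfl
  have hh0 : selmerH0 k a ≤ h := le_trans (Nat.le_add_right _ _) hh
  have hkey := aux_key ha1 hk hmono hh
  have hNmem := postN_mem (k := k) (a := a) hmono h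
  have hNlb := postN_lb ha1 hmono hk hh0
  have hmemk : k ∈ Finset.Icc 1 k := by simp; omega
  -- postN k a h + a k is not (h+1)-representable
  have hstep1 : ¬ IsRep k a (h+1) (postN k a h + a k) := by
    rintro ⟨x, hs, hw⟩
    by_cases hxk : x k = 0
    · have hb : postN k a h + a k ≤ (h + 1) * a (k-1) := by
        calc postN k a h + a k = ∑ i ∈ Finset.Icc 1 k, x i * a i := hs.symm
          _ ≤ ∑ i ∈ Finset.Icc 1 k, x i * a (k-1) := by
              refine Finset.sum_le_sum fun i hi => ?_
              simp only [Finset.mem_Icc] at hi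
              rcases eq_or_lt_of_le hi.2 with heq | hlt
              · subst heq; simp [hxk]
              · exact Nat.mul_le_mul_left _
                  (aux_mono hmono i (k-1) hi.1 (by omega) (by omega))
          _ = (∑ i ∈ Finset.Icc 1 k, x i) * a (k-1) := (Finset.sum_mul _ _ _).symm
          _ ≤ (h + 1) * a (k-1) := Nat.mul_le_mul_right _ hw
      have hsplit : (h - selmerH0 k a + 2) * a k
          = (h - selmerH0 k a + 1) * a k + a k := by ring
      omega
    · set x' : ℕ → ℕ := fun i => x i - if i = k then 1 else 0 with hx'def
      have hx : ∀ i, x i = x' i + (if i = k then 1 else 0) := by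
        intro i
        by_cases hi : i = k <;> simp [hx'def, hi] <;> omega
      have hs' : ∑ i ∈ Finset.Icc 1 k, (x' i + if i = k then 1 else 0) * a i
          = postN k a h + a k := by
        rw [← hs]; exact Finset.sum_congr rfl fun i _ => by rw [← hx i]
      have hw' : ∑ i ∈ Finset.Icc 1 k, (x' i + if i = k then 1 else 0) ≤ h + 1 := by
        rw [show ∑ i ∈ Finset.Icc 1 k, (x' i + if i = k then 1 else 0)
            = ∑ i ∈ Finset.Icc 1 k, x i from
          Finset.sum_congr rfl fun i _ => by rw [← hx i]]
        exact hw
      rw [aux_sum_ite _ _ hmemk] at hs'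
      rw [aux_sum_ite_w _ _ hmemk] at hw'
      exact hNmem.2 ⟨x', by omega, by omega⟩
  -- everything positive below postN k a h + a k is (h+1)-representable
  have hstep2 : ∀ n, 0 < n → n < postN k a h + a k → IsRep k a (h+1) n := by
    intro n hn hlt
    rcases Nat.lt_or_ge n (postN k a h) with hnN | hnN
    · obtain ⟨x, hx1, hx2⟩ := postN_min hn hnN
      exact ⟨x, hx1, by omega⟩
    · have hNak : a k ≤ postN k a h := by
        have h1k : 1 * a k ≤ (h - selmerH0 k a + 1) * a k :=
          Nat.mul_le_mul_right _ (by omega)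
        omega
      rcases Nat.eq_or_lt_of_le (show a k ≤ n by omega) with heq | hgt
      · exact aux_rep ha1 hmono hk n (h+1)
          (by rw [← heq, Nat.div_self (show 0 < a k by omega)]; omega)
      · obtain ⟨y, hy1, hy2⟩ := postN_min (show 0 < n - a k by omega)
          (show n - a k < postN k a h by omega)
        refine ⟨fun i => y i + if i = k then 1 else 0, ?_, ?_⟩
        · rw [aux_sum_ite _ _ hmemk, hy1]; omega
        · rw [aux_sum_ite_w _ _ hmemk]; omega
  -- conclude
  have hne := aux_nonempty (k := k) (a := a) hmono (h+1)
  have hmem2 := Nat.sInf_mem hne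
  apply le_antisymm
  · exact Nat.sInf_le ⟨by omega, hstep1⟩
  · by_contra hcon
    push_neg at hcon
    exact hmem2.2 (hstep2 _ hmem2.1 hcon)
end

section
/- For coprime positive integers b_1 < b_2 < ... < b_k (k ≥ 2), the Frobenius number satisfies g(b_1,...,b_k) < b_k · b_1. -/
open Finset

lemma bezout_finset (s : Finset ℕ) (f : ℕ → ℕ) :
    ∃ z : ℕ → ℤ, ∑ i ∈ s, z i * f i = s.gcd f := by
  induction s using Finset.induction_on with
  | empty => exact ⟨0, by simp⟩
  | insert a s ha ih =>
    obtain ⟨z, hz⟩ := ih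
    refine ⟨fun i => if i = a then Nat.gcdA (f a) (s.gcd f)
      else Nat.gcdB (f a) (s.gcd f) * z i, ?_⟩
    rw [Finset.sum_insert ha, Finset.gcd_insert]
    rw [Finset.sum_congr rfl (fun i hi => by
      simp only []
      rw [if_neg (show i ≠ a by rintro rfl; exact ha hi)])]
    simp only [if_pos rfl]
    have h2 : ∑ i ∈ s, Nat.gcdB (f a) (s.gcd f) * z i * f i
        = Nat.gcdB (f a) (s.gcd f) * ∑ i ∈ s, z i * f i := by
      rw [Finset.mul_sum]; exact Finset.sum_congr rfl fun i _ => by ring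
    rw [h2, hz]
    have h3 : GCDMonoid.gcd (f a) (s.gcd f) = Nat.gcd (f a) (s.gcd f) := rfl
    rw [h3, Nat.gcd_eq_gcd_ab]; push_cast; ring

lemma rep_of_big (k : ℕ) (b : ℕ → ℕ) (hk : 2 ≤ k) (hpos : 0 < b 1)
    (hmono : ∀ i, 1 ≤ i → i < k → b i < b (i + 1))
    (hgcd : (Finset.Icc 1 k).gcd b = 1)
    (n : ℕ) (hn : (b 1 - 1) * b k ≤ n) :
    ∃ x : ℕ → ℕ, ∑ i ∈ Finset.Icc 1 k, x i * b i = n := by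
  classical
  haveI : NeZero (b 1) := ⟨hpos.ne'⟩
  -- b is bounded by b k on [1,k]
  have hle : ∀ j ∈ Finset.Icc 1 k, b j ≤ b k := by
    have key : ∀ d j, 1 ≤ j → j + d ≤ k → b j ≤ b (j + d) := by
      intro d
      induction d with
      | zero => intro j _ _; simp
      | succ d ih =>
        intro j h1 h2
        have h4 := ih j h1 (by omega)
        have h3 := hmono (j + d) (by omega) (by omega)
        have e : j + (d + 1) = j + d + 1 := rfl
        rw [e]
        omega
    intro j hj
    obtain ⟨h1, h2⟩ := Finset.mem_Icc.mp hj
    have e : j + (k - j) = k := by omega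
    have := key (k - j) j h1 (by omega)
    rwa [e] at this
  -- P m r : r is achievable with weight ≤ m
  set P : ℕ → ZMod (b 1) → Prop :=
    fun m r => ∃ c : ℕ → ℕ, (∑ i ∈ Icc 1 k, c i ≤ m) ∧
      ((∑ i ∈ Icc 1 k, c i * b i : ℕ) : ZMod (b 1)) = r with hPdef
  have Pmono : ∀ {m m' r}, m ≤ m' → P m r → P m' r := by
    rintro m m' r hmm ⟨c, hw, hr⟩; exact ⟨c, hw.trans hmm, hr⟩
  have Pzero : P 0 0 := ⟨0, by simp, by simp⟩
  have Pstep : ∀ m r i, i ∈ Icc 1 k → P m r → P (m + 1) (r + (b i : ZMod (b 1))) := by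
    rintro m r i hi ⟨c, hw, hr⟩
    refine ⟨Function.update c i (c i + 1), ?_, ?_⟩
    · rw [Finset.sum_update_of_mem hi, Finset.sdiff_singleton_eq_erase]
      rw [← Finset.add_sum_erase _ c hi] at hw
      omega
    · have herw : ∑ j ∈ Icc 1 k, Function.update c i (c i + 1) j * b j
          = ∑ j ∈ Icc 1 k, c j * b j + b i := by
        have e1 : ∀ j, Function.update c i (c i + 1) j * b j
            = Function.update (fun j => c j * b j) i ((c i + 1) * b i) j := by
          intro j; by_cases h : j = i
          · subst h; simp
          · simp [Function.update_of_ne h]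
        rw [Finset.sum_congr rfl fun j _ => e1 j, Finset.sum_update_of_mem hi,
          Finset.sdiff_singleton_eq_erase,
          ← Finset.add_sum_erase _ (fun j => c j * b j) hi]
        ring
      rw [herw, Nat.cast_add, hr]
  -- every residue reachable at some weight
  have hres : ∀ r : ZMod (b 1), ∃ w, P w r := by
    obtain ⟨z, hz⟩ := bezout_finset (Icc 1 k) b
    rw [hgcd] at hz
    intro r
    refine ⟨∑ i ∈ Icc 1 k, (r * ((z i : ℤ) : ZMod (b 1))).val,
      ⟨fun i => (r * ((z i : ℤ) : ZMod (b 1))).val, le_rfl, ?_⟩⟩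
    have hz' : (∑ i ∈ Icc 1 k, ((z i : ℤ) : ZMod (b 1)) * (b i : ZMod (b 1))) = 1 := by
      have := congrArg (fun t : ℤ => (t : ZMod (b 1))) hz
      push_cast at this
      exact this
    push_cast
    calc ∑ i ∈ Icc 1 k, ((((r * ((z i : ℤ) : ZMod (b 1))).val : ℕ) : ZMod (b 1)) * (b i : ZMod (b 1)))
        = ∑ i ∈ Icc 1 k, r * (((z i : ℤ) : ZMod (b 1)) * (b i : ZMod (b 1))) := by
          refine Finset.sum_congr rfl fun i _ => ?_
          rw [ZMod.natCast_rightInverse _]; ring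
      _ = r * ∑ i ∈ Icc 1 k, ((z i : ℤ) : ZMod (b 1)) * (b i : ZMod (b 1)) := by
          rw [Finset.mul_sum]
      _ = r := by rw [hz', mul_one]
  -- pigeonhole: some level stabilizes below b 1
  set A : ℕ → Finset (ZMod (b 1)) := fun m => Finset.univ.filter (fun r => P m r) with hA
  have hPA : ∀ m r, P m r ↔ r ∈ A m := by intro m r; simp [hA]
  have hAsub : ∀ m, A m ⊆ A (m + 1) := by
    intro m r hr
    rw [← hPA] at hr ⊢
    exact Pmono (Nat.le_succ m) hr
  have hstab : ∃ m, m < b 1 ∧ A m = A (m + 1) := by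
    by_contra hcon
    push_neg at hcon
    have hgrow : ∀ m, m ≤ b 1 → m + 1 ≤ (A m).card := by
      intro m
      induction m with
      | zero =>
        intro _
        exact Finset.card_pos.mpr ⟨0, (hPA 0 0).mp Pzero⟩
      | succ m ih =>
        intro hm
        have h1 := ih (by omega)
        have h2 : A m ⊂ A (m + 1) :=
          Finset.ssubset_iff_subset_ne.mpr ⟨hAsub m, hcon m (by omega)⟩
        have h3 := Finset.card_lt_card h2
        omega
    have h4 := hgrow (b 1) le_rfl
    have h5 := Finset.card_le_univ (A (b 1))
    rw [ZMod.card] at h5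
    omega
  obtain ⟨m, hmlt, hmeq⟩ := hstab
  have hclosed : ∀ r, P m r → ∀ i ∈ Icc 1 k, P m (r + (b i : ZMod (b 1))) := by
    intro r hr i hi
    have h1 := Pstep m r i hi hr
    exact (hPA m _).mpr (hmeq ▸ (hPA (m + 1) _).mp h1)
  have habs : ∀ w r, P w r → P m r := by
    intro w
    induction w with
    | zero => exact fun r h => Pmono (Nat.zero_le m) h
    | succ w ih =>
      rintro r ⟨c, hw, hr⟩
      by_cases hcw : ∑ i ∈ Icc 1 k, c i ≤ w
      · exact ih r ⟨c, hcw, hr⟩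
      · have hex : ∃ i ∈ Icc 1 k, 0 < c i := by
          by_contra h
          push_neg at h
          have : ∑ i ∈ Icc 1 k, c i = 0 :=
            Finset.sum_eq_zero fun i hi => by have := h i hi; omega
          omega
        obtain ⟨i, hi, hci⟩ := hex
        have hdec : ∑ j ∈ Icc 1 k, Function.update c i (c i - 1) j * b j + b i
            = ∑ j ∈ Icc 1 k, c j * b j := by
          have e1 : ∀ j, Function.update c i (c i - 1) j * b j
              = Function.update (fun j => c j * b j) i ((c i - 1) * b i) j := by
            intro j; by_cases h : j = i
            · subst h; simp
            · simp [Function.update_of_ne h]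
          rw [Finset.sum_congr rfl fun j _ => e1 j, Finset.sum_update_of_mem hi,
            Finset.sdiff_singleton_eq_erase]
          obtain ⟨d, hd⟩ : ∃ d, c i = d + 1 := ⟨c i - 1, by omega⟩
          rw [← Finset.add_sum_erase _ (fun j => c j * b j) hi, hd]
          simp [Nat.add_sub_cancel]
          ring
        have hwdec : ∑ j ∈ Icc 1 k, Function.update c i (c i - 1) j ≤ w := by
          rw [Finset.sum_update_of_mem hi, Finset.sdiff_singleton_eq_erase]
          rw [← Finset.add_sum_erase _ c hi] at hw
          omega
        have h1 : P w (((∑ j ∈ Icc 1 k, Function.update c i (c i - 1) j * b j : ℕ)) : ZMod (b 1)) :=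
          ⟨_, hwdec, rfl⟩
        have h2 := hclosed _ (ih _ h1) i hi
        have h3 : r = ((∑ j ∈ Icc 1 k, Function.update c i (c i - 1) j * b j : ℕ) : ZMod (b 1))
            + ((b i : ℕ) : ZMod (b 1)) := by
          rw [← hr, ← hdec, Nat.cast_add]
        exact h3 ▸ h2
  have hall : ∀ r, P (b 1 - 1) r := fun r => by
    obtain ⟨w, hw⟩ := hres r
    exact Pmono (by omega) (habs w r hw)
  -- conclude
  obtain ⟨c, hw, hr⟩ := hall ((n : ZMod (b 1)))
  have hsle : ∑ i ∈ Icc 1 k, c i * b i ≤ (b 1 - 1) * b k := by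
    calc ∑ i ∈ Icc 1 k, c i * b i ≤ ∑ i ∈ Icc 1 k, c i * b k :=
          Finset.sum_le_sum fun i hi => Nat.mul_le_mul_left _ (hle i hi)
      _ = (∑ i ∈ Icc 1 k, c i) * b k := (Finset.sum_mul _ _ _).symm
      _ ≤ (b 1 - 1) * b k := Nat.mul_le_mul_right _ hw
  have hmd : (∑ i ∈ Icc 1 k, c i * b i) ≡ n [MOD b 1] :=
    (ZMod.natCast_eq_natCast_iff _ _ _).mp hr
  obtain ⟨t, ht⟩ := (Nat.modEq_iff_dvd' (hsle.trans hn)).mp hmd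
  have h1k : (1 : ℕ) ∈ Icc 1 k := Finset.mem_Icc.mpr ⟨le_refl 1, by omega⟩
  refine ⟨Function.update c 1 (c 1 + t), ?_⟩
  have e1 : ∀ j, Function.update c 1 (c 1 + t) j * b j
      = Function.update (fun j => c j * b j) 1 ((c 1 + t) * b 1) j := by
    intro j; by_cases h : j = 1
    · subst h; simp
    · simp [Function.update_of_ne h]
  rw [Finset.sum_congr rfl fun j _ => e1 j, Finset.sum_update_of_mem h1k,
    Finset.sdiff_singleton_eq_erase]
  have hts : ∑ i ∈ Icc 1 k, c i * b i + b 1 * t = n := by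
    have := hsle.trans hn
    omega
  calc (c 1 + t) * b 1 + ∑ j ∈ (Icc 1 k).erase 1, c j * b j
      = (c 1 * b 1 + ∑ j ∈ (Icc 1 k).erase 1, c j * b j) + b 1 * t := by ring
    _ = ∑ i ∈ Icc 1 k, c i * b i + b 1 * t := by
        rw [← Finset.add_sum_erase _ (fun j => c j * b j) h1k]
    _ = n := hts

theorem stmt8 (k : ℕ) (b : ℕ → ℕ) (hk : 2 ≤ k) (hpos : 0 < b 1)
    (hmono : ∀ i, 1 ≤ i → i < k → b i < b (i + 1))
    (hgcd : (Finset.Icc 1 k).gcd b = 1) :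
    FrobZ k b < (b k * b 1 : ℕ) := by
  have hb1k : b 1 ≤ b k := by
    have key : ∀ d j, 1 ≤ j → j + d ≤ k → b j ≤ b (j + d) := by
      intro d
      induction d with
      | zero => intro j _ _; simp
      | succ d ih =>
        intro j h1 h2
        have h4 := ih j h1 (by omega)
        have h3 := hmono (j + d) (by omega) (by omega)
        have e : j + (d + 1) = j + d + 1 := rfl
        rw [e]; omega
    have h := key (k - 1) 1 le_rfl (by omega)
    have e : 1 + (k - 1) = k := by omega
    rwa [e] at h
  have hub : FrobZ k b ≤ (((b 1 - 1) * b k : ℕ) : ℤ) := by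
    rw [FrobZ]
    apply csSup_le
    · refine ⟨-1, ?_⟩
      simp only [Set.mem_setOf_eq]
      rintro ⟨x, hx⟩
      have := Int.natCast_nonneg (∑ i ∈ Finset.Icc 1 k, x i * b i)
      omega
    · rintro z hz
      simp only [Set.mem_setOf_eq] at hz
      by_contra hlt
      push_neg at hlt
      have hz0 : (0:ℤ) ≤ z := le_trans (Int.natCast_nonneg _) hlt.le
      obtain ⟨x, hx⟩ := rep_of_big k b hk hpos hmono hgcd z.toNat (by omega)
      exact hz ⟨x, by rw [hx]; omega⟩
  refine lt_of_le_of_lt hub ?_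
  have hmain : (b 1 - 1) * b k < b k * b 1 := by
    have hbk : 0 < b k := lt_of_lt_of_le hpos hb1k
    calc (b 1 - 1) * b k < b 1 * b k := (Nat.mul_lt_mul_right hbk).mpr (by omega)
      _ = b k * b 1 := Nat.mul_comm _ _
  exact_mod_cast hmain
end
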